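/- arXiv:2509.25431 — 3 statements merged into one kernel-verified Lean document; each statement's English description precedes it below -/
import Mathlib

section
/- Fix n ∈ ℕ, an adjacency parameter A ∈ ℕ with A ≥ 1, and a privacy parameter ε ≥ 0. For all graphs G, G' on n nodes with d_Δ(E(G), E(G')) ≤ A and every candidate output graph H on n nodes, the output probabilities of the graph exponential mechanism satisfy exp(ε·u(G,H)/A) / (1 + exp(−ε/A))^{C(n,2)} ≤ exp(ε) · exp(ε·u(G',H)/A) / (1 + exp(−ε/A))^{C(n,2)}. -/
/-- The set `K_n` of all `C(n,2)` unordered pairs of distinct nodes of `Fin n`.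
A simple undirected graph on `n` nodes is identified with its edge set, a subset of `Kn n`. -/
def Kn (n : ℕ) : Finset (Sym2 (Fin n)) := Finset.univ.filter (fun e => ¬ e.IsDiag)

/-- The utility `u(G, H) = −d_Δ(E(G), E(H))`, as a real number. -/
def util {n : ℕ} (G H : Finset (Sym2 (Fin n))) : ℝ := -((symmDiff G H).card : ℝ)

/-- **Pointwise differential-privacy bound for the graph exponential mechanism.**
Fix `n`, an adjacency parameter `A ≥ 1`, and a privacy parameter `ε ≥ 0`. For all graphs
`G, G'` on `n` nodes with `d_Δ(E(G), E(G')) ≤ A` and every candidate output graph `H`,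
`exp(ε·u(G,H)/A) / (1+exp(−ε/A))^(C(n,2)) ≤ exp(ε) · exp(ε·u(G',H)/A) / (1+exp(−ε/A))^(C(n,2))`. -/
theorem graph_exp_mech_pointwise_dp (n A : ℕ) (hA : 1 ≤ A) (ε : ℝ) (hε : 0 ≤ ε)
    (G G' H : Finset (Sym2 (Fin n)))
    (hG : G ⊆ Kn n) (hG' : G' ⊆ Kn n) (hH : H ⊆ Kn n)
    (hadj : (symmDiff G G').card ≤ A) :
    Real.exp (ε * util G H / A) / (1 + Real.exp (-ε / A)) ^ n.choose 2
      ≤ Real.exp ε *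
        (Real.exp (ε * util G' H / A) / (1 + Real.exp (-ε / A)) ^ n.choose 2) := by
  have hApos : (0 : ℝ) < A := by exact_mod_cast hA
  have htri : (symmDiff G' H).card ≤ (symmDiff G G').card + (symmDiff G H).card := by
    calc (symmDiff G' H).card ≤ (symmDiff G' G ∪ symmDiff G H).card :=
          Finset.card_le_card (by
            intro x hx
            simp only [Finset.mem_union, Finset.mem_symmDiff] at hx ⊢
            by_cases hx' : x ∈ G <;> tauto)
      _ ≤ (symmDiff G' G).card + (symmDiff G H).card := Finset.card_union_le _ _
      _ = _ := by rw [symmDiff_comm]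
  have hutil : util G H ≤ (A : ℝ) + util G' H := by
    unfold util
    have h1 : ((symmDiff G' H).card : ℝ) ≤ (symmDiff G G').card + (symmDiff G H).card := by
      exact_mod_cast htri
    have h2 : ((symmDiff G G').card : ℝ) ≤ A := by exact_mod_cast hadj
    linarith
  have hexp : ε * util G H / A ≤ ε + ε * util G' H / A := by
    rw [div_le_iff₀ hApos, add_mul, div_mul_cancel₀ _ (ne_of_gt hApos)]
    nlinarith [mul_le_mul_of_nonneg_left hutil hε]
  have hden : (0 : ℝ) < (1 + Real.exp (-ε / A)) ^ n.choose 2 := by positivity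
  rw [mul_div_assoc', ← Real.exp_add]
  gcongr
end

section
/- Fix an adjacency parameter A ∈ ℕ with A ≥ 1, a privacy parameter ε ≥ 0, and N ∈ ℕ. Let p = 1 / (1 + exp(−ε/A)). Then for every d ∈ {0, 1, …, N}, p^{N − d} · (1 − p)^{d} = exp(−εd/A) / (1 + exp(−ε/A))^{N}. Consequently, the modified Erdős–Rényi model with edge probabilities p for edges of the input graph and 1 − p for non-edges assigns to every candidate output graph H exactly the same probability as the graph exponential mechanism (taking N = C(n,2) and d = d_Δ(E(G), E(H))), so the two mechanisms define the same distribution over graphs on n nodes. -/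
theorem one_sub_one_div_one_add {K : Type*} [Field K] {a : K} (ha : 1 + a ≠ 0) :
    1 - 1 / (1 + a) = a / (1 + a) := by
  field_simp
  ring

theorem one_div_one_add_pow_sub_mul_div_one_add_pow {K : Type*} [Field K] (a : K)
    {d N : ℕ} (hd : d ≤ N) :
    (1 / (1 + a)) ^ (N - d) * (a / (1 + a)) ^ d = a ^ d / (1 + a) ^ N := by
  rw [div_pow, div_pow, one_pow, div_mul_div_comm, one_mul, ← pow_add, Nat.sub_add_cancel hd]

theorem card_Kn (n : ℕ) : (Kn n).card = n.choose 2 := by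
  simpa [Fintype.card_subtype, Kn] using Sym2.card_subtype_not_diag (α := Fin n)

theorem Finset.card_symmDiff_le_of_subset {α : Type*} [DecidableEq α] {s t u : Finset α}
    (hs : s ⊆ u) (ht : t ⊆ u) : (symmDiff s t).card ≤ u.card :=
  Finset.card_le_card (symmDiff_le_sup.trans (sup_le hs ht))

theorem modified_ER_eq_graph_exp_mech_general (A : ℕ) (ε : ℝ)
    (N : ℕ) (p : ℝ) (hp : p = 1 / (1 + Real.exp (-ε / A))) :
    (∀ d : ℕ, d ≤ N →
        p ^ (N - d) * (1 - p) ^ d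
          = Real.exp (-ε * d / A) / (1 + Real.exp (-ε / A)) ^ N)
    ∧ (∀ n : ℕ, ∀ G H : Finset (Sym2 (Fin n)), G ⊆ Kn n → H ⊆ Kn n →
        p ^ (n.choose 2 - (symmDiff G H).card) * (1 - p) ^ (symmDiff G H).card
          = Real.exp (-ε * ((symmDiff G H).card : ℝ) / A)
              / (1 + Real.exp (-ε / A)) ^ n.choose 2) := by
  have hne : 1 + Real.exp (-ε / A) ≠ 0 := by positivity
  have weight : ∀ d N : ℕ, d ≤ N →
      p ^ (N - d) * (1 - p) ^ d = Real.exp (-ε * d / A) / (1 + Real.exp (-ε / A)) ^ N := by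
    intro d N hd
    have hexp : Real.exp (-ε / A) ^ d = Real.exp (-ε * d / A) := by
      rw [← Real.exp_nat_mul]
      ring_nf
    rw [hp, one_sub_one_div_one_add hne, one_div_one_add_pow_sub_mul_div_one_add_pow _ hd, hexp]
  refine ⟨(weight · N), fun n G H hG hH => weight _ _ ?_⟩
  exact card_Kn n ▸ Finset.card_symmDiff_le_of_subset hG hH

/-- **Equivalence of the modified Erdős–Rényi model and the graph exponential mechanism.**
Fix an adjacency parameter `A ≥ 1`, a privacy parameter `ε ≥ 0`, and `N ∈ ℕ`, and let
`p = 1/(1 + exp(−ε/A))`. Then for every `d ∈ {0,…,N}`,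
`p^(N−d) · (1−p)^d = exp(−εd/A) / (1 + exp(−ε/A))^N`. Consequently, the modified
Erdős–Rényi model assigns to every candidate output graph `H` exactly the probability
that the graph exponential mechanism does (taking `N = C(n,2)` and
`d = d_Δ(E(G), E(H))`), so the two mechanisms define the same distribution. -/
theorem modified_ER_eq_graph_exp_mech (A : ℕ) (hA : 1 ≤ A) (ε : ℝ) (hε : 0 ≤ ε)
    (N : ℕ) (p : ℝ) (hp : p = 1 / (1 + Real.exp (-ε / A))) :
    (∀ d : ℕ, d ≤ N →
        p ^ (N - d) * (1 - p) ^ d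
          = Real.exp (-ε * d / A) / (1 + Real.exp (-ε / A)) ^ N)
    ∧ (∀ n : ℕ, ∀ G H : Finset (Sym2 (Fin n)), G ⊆ Kn n → H ⊆ Kn n →
        p ^ (n.choose 2 - (symmDiff G H).card) * (1 - p) ^ (symmDiff G H).card
          = Real.exp (-ε * ((symmDiff G H).card : ℝ) / A)
              / (1 + Real.exp (-ε / A)) ^ n.choose 2) :=
  modified_ER_eq_graph_exp_mech_general A ε N p hp
end

section
/- Fix N ∈ ℕ, e ∈ {0, …, N}, and p ∈ [0, 1]. For the modified Erdős–Rényi model over a ground set of N potential edges with input edge set of size e, the probability that the output differs from the input in exactly k edges equals ∑_{ℓ=0}^{k} C(e, ℓ) · C(N − e, k − ℓ) · p^{N − k} · (1 − p)^{k}, and this equals C(N, k) · p^{N − k} · (1 − p)^{k}. In particular, with p = 1/(1 + exp(−ε/A)) this probability equals C(N, k) · exp(−εk/A) / (1 + exp(−ε/A))^{N}, matching the probability that the graph exponential mechanism outputs a graph at Fréchet–Nikodym distance k from the input. -/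
/-!
Since `E ⊆ K`, the map `F ↦ E ∆ F` is an involution of the subsets of `K` carrying the outputs at
distance `k` from `E` onto the `k`-subsets of `K`. The output probability depends only on the
distance, so the mass at distance `k` is `C(N, k) p^(N-k) (1-p)^k`; Vandermonde's identity splits
`C(N, k)` according to how many of the `k` changed pairs lie in `E`. For `p = 1 / (1 + x)` with
`x = exp(-ε/A)`, one has `1 - p = x p`, which gives the exponential-mechanism form.
-/

open Finset

theorem card_filter_card_symmDiff_eq {α : Type*} [DecidableEq α] {K E : Finset α}
    (hE : E ⊆ K) (k : ℕ) :
    #{F ∈ K.powerset | #(symmDiff E F) = k} = (#K).choose k := by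
  rw [← card_powersetCard]
  have hsub : ∀ {F}, F ⊆ K → symmDiff E F ⊆ K := fun hF =>
    symmDiff_le_sup.trans (sup_le hE hF)
  refine card_nbij' (symmDiff E ·) (symmDiff E ·) ?_ ?_ ?_ ?_
  · intro F hF
    simp only [mem_coe, mem_filter, mem_powerset, mem_powersetCard] at hF ⊢
    exact ⟨hsub hF.1, hF.2⟩
  · intro D hD
    simp only [mem_coe, mem_filter, mem_powerset, mem_powersetCard,
      symmDiff_symmDiff_cancel_left] at hD ⊢
    exact ⟨hsub hD.1, hD.2⟩
  · exact fun F _ => symmDiff_symmDiff_cancel_left E F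
  · exact fun D _ => symmDiff_symmDiff_cancel_left E D

theorem sum_filter_card_symmDiff_eq {α M : Type*} [DecidableEq α] [AddCommMonoid M]
    {K E : Finset α} (hE : E ⊆ K) (k : ℕ) (f : ℕ → M) :
    ∑ F ∈ K.powerset with #(symmDiff E F) = k, f #(symmDiff E F) = (#K).choose k • f k := by
  rw [sum_congr rfl fun F hF => congrArg f (mem_filter.mp hF).2, sum_const,
    card_filter_card_symmDiff_eq hE]

theorem Nat.sum_range_choose_mul_choose_sub (m n k : ℕ) :
    ∑ ℓ ∈ range (k + 1), m.choose ℓ * n.choose (k - ℓ) = (m + n).choose k := by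
  rw [Nat.add_choose_eq,
    Nat.sum_antidiagonal_eq_sum_range_succ (fun i j => m.choose i * n.choose j)]

theorem one_div_one_add_pow_mul_one_sub_pow {𝕜 : Type*} [Field 𝕜] {x : 𝕜} (hx : 1 + x ≠ 0)
    {k N : ℕ} (hk : k ≤ N) :
    (1 / (1 + x)) ^ (N - k) * (1 - 1 / (1 + x)) ^ k = x ^ k / (1 + x) ^ N := by
  have h1p : 1 - 1 / (1 + x) = x / (1 + x) := by field_simp; ring
  rw [h1p, div_pow, div_pow, one_pow, ← Nat.sub_add_cancel hk, pow_add, Nat.add_sub_cancel]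
  field_simp

theorem modified_ER_dist_k_prob_general {α : Type*} [DecidableEq α]
    (K E : Finset α) (hE : E ⊆ K) (N e : ℕ) (hN : K.card = N) (he : E.card = e)
    (k : ℕ) (hk : k ≤ N) (p : ℝ)
    (A : ℕ) (ε : ℝ) :
    (∑ F ∈ K.powerset.filter (fun F => (symmDiff E F).card = k),
          p ^ (N - (symmDiff E F).card) * (1 - p) ^ (symmDiff E F).card
        = ∑ ℓ ∈ Finset.range (k + 1),
            (e.choose ℓ : ℝ) * ((N - e).choose (k - ℓ) : ℝ) * p ^ (N - k) * (1 - p) ^ k)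
    ∧ (∑ F ∈ K.powerset.filter (fun F => (symmDiff E F).card = k),
          p ^ (N - (symmDiff E F).card) * (1 - p) ^ (symmDiff E F).card
        = (N.choose k : ℝ) * p ^ (N - k) * (1 - p) ^ k)
    ∧ (p = 1 / (1 + Real.exp (-ε / A)) →
        ∑ F ∈ K.powerset.filter (fun F => (symmDiff E F).card = k),
            p ^ (N - (symmDiff E F).card) * (1 - p) ^ (symmDiff E F).card
          = (N.choose k : ℝ) * Real.exp (-ε * k / A) / (1 + Real.exp (-ε / A)) ^ N) := by
  have hmass : ∑ F ∈ K.powerset with #(symmDiff E F) = k,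
      p ^ (N - #(symmDiff E F)) * (1 - p) ^ #(symmDiff E F)
        = (N.choose k : ℝ) * p ^ (N - k) * (1 - p) ^ k := by
    rw [sum_filter_card_symmDiff_eq hE k (fun d => p ^ (N - d) * (1 - p) ^ d), hN,
      nsmul_eq_mul, mul_assoc]
  have hvandermonde : ∑ ℓ ∈ range (k + 1), e.choose ℓ * (N - e).choose (k - ℓ) = N.choose k := by
    rw [Nat.sum_range_choose_mul_choose_sub, Nat.add_sub_cancel' (hN ▸ he ▸ card_le_card hE)]
  refine ⟨?_, hmass, fun hp => ?_⟩
  · rw [hmass, ← hvandermonde]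
    push_cast
    rw [sum_mul, sum_mul]
  · rw [hmass, hp, mul_assoc, one_div_one_add_pow_mul_one_sub_pow (by positivity) hk,
      ← Real.exp_nat_mul, mul_div_assoc]
    ring_nf

/-- **Probability that the modified Erdős–Rényi model differs in exactly `k` edges.**
Fix a ground set `K` of `N` potential edges and an input edge set `E ⊆ K` with `|E| = e`,
and `p ∈ [0,1]`. The probability that the output differs from the input in exactly `k`
edges (i.e. the total mass of outputs `F ⊆ K` with `|E Δ F| = k`, where each output `F`
has probability `p^(N−|E Δ F|)·(1−p)^(|E Δ F|)`) equals
`∑_{ℓ=0}^{k} C(e,ℓ)·C(N−e,k−ℓ)·p^(N−k)·(1−p)^k`, which equals `C(N,k)·p^(N−k)·(1−p)^k`.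
In particular, with `p = 1/(1+exp(−ε/A))` it equals `C(N,k)·exp(−εk/A)/(1+exp(−ε/A))^N`,
matching the probability that the graph exponential mechanism outputs a graph at
Fréchet–Nikodym distance `k` from the input. -/
theorem modified_ER_dist_k_prob {α : Type*} [DecidableEq α]
    (K E : Finset α) (hE : E ⊆ K) (N e : ℕ) (hN : K.card = N) (he : E.card = e)
    (k : ℕ) (hk : k ≤ N) (p : ℝ) (hp0 : 0 ≤ p) (hp1 : p ≤ 1)
    (A : ℕ) (hA : 1 ≤ A) (ε : ℝ) (hε : 0 ≤ ε) :
    (∑ F ∈ K.powerset.filter (fun F => (symmDiff E F).card = k),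
          p ^ (N - (symmDiff E F).card) * (1 - p) ^ (symmDiff E F).card
        = ∑ ℓ ∈ Finset.range (k + 1),
            (e.choose ℓ : ℝ) * ((N - e).choose (k - ℓ) : ℝ) * p ^ (N - k) * (1 - p) ^ k)
    ∧ (∑ F ∈ K.powerset.filter (fun F => (symmDiff E F).card = k),
          p ^ (N - (symmDiff E F).card) * (1 - p) ^ (symmDiff E F).card
        = (N.choose k : ℝ) * p ^ (N - k) * (1 - p) ^ k)
    ∧ (p = 1 / (1 + Real.exp (-ε / A)) →
        ∑ F ∈ K.powerset.filter (fun F => (symmDiff E F).card = k),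
            p ^ (N - (symmDiff E F).card) * (1 - p) ^ (symmDiff E F).card
          = (N.choose k : ℝ) * Real.exp (-ε * k / A) / (1 + Real.exp (-ε / A)) ^ N) :=
  modified_ER_dist_k_prob_general K E hE N e hN he k hk p A ε
end
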